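/- Let P : I → (0,∞) be a C² function on an open interval I satisfying the traveling-wave profile equation P''(y) = (2/k²) f(P(y)) - (2sμ/k²) P'(y) + (P'(y))²/P(y) for all y ∈ I. Then for every y ∈ I the derivative of the energy y ↦ F(P(y)) - (1/2)(P'(y)/P(y))² equals (2sμ/k²)(P'(y)/P(y))². In particular, if s > 0 this energy is non-decreasing along the solution. -/

import Mathlib

open Real Filter

/-- The function `F` with `F'(P) = (2/k²) f(P)/P²`, where `f(P) = P^γ - C + A²/P`. -/
noncomputable def Ffun (γ k A C P : ℝ) : ℝ :=
  if γ = 1 then (2 / k ^ 2) * (Real.log P + C / P - A ^ 2 / (2 * P ^ 2))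
  else (2 / k ^ 2) * (P ^ (γ - 1) / (γ - 1) + C / P - A ^ 2 / (2 * P ^ 2))

/-! Writing `u = P'/P`, the profile equation says `u' = ((2/k²) f(P) - (2sμ/k²) P') / P`.
Since `F'(P) P' = (2/k²) f(P) P'/P²`, the terms with `f` cancel in `(F(P) - u²/2)' = F'(P) P' - u u'`,
leaving `(2sμ/k²) u²`. -/

section ProfileFunction

variable {p : ℝ}

-- Written as `p ^ 1 / p ^ 2` so that `γ = 1` fits the same pattern as `γ ≠ 1` below.
theorem hasDerivAt_log_eq_rpow_div_sq (hp : 0 < p) :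
    HasDerivAt Real.log (p ^ (1 : ℝ) / p ^ 2) p := by
  refine (Real.hasDerivAt_log hp.ne').congr_deriv ?_
  rw [Real.rpow_one]
  field_simp

theorem hasDerivAt_rpow_sub_one_div_sub_one {γ : ℝ} (hγ : γ ≠ 1) (hp : 0 < p) :
    HasDerivAt (fun x : ℝ => x ^ (γ - 1) / (γ - 1)) (p ^ γ / p ^ 2) p := by
  refine ((Real.hasDerivAt_rpow_const (p := γ - 1) (Or.inl hp.ne')).div_const _).congr_deriv ?_
  have hpow : p ^ (γ - 1 - 1) * p ^ 2 = p ^ γ := by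
    rw [← Real.rpow_two, ← Real.rpow_add hp]
    ring_nf
  rw [← hpow]
  field_simp [sub_ne_zero.mpr hγ]

theorem hasDerivAt_profile_primitive {h : ℝ → ℝ} {γ : ℝ} (k A C : ℝ)
    (hh : HasDerivAt h (p ^ γ / p ^ 2) p) (hp : 0 < p) :
    HasDerivAt (fun x => (2 / k ^ 2) * (h x + C / x - A ^ 2 / (2 * x ^ 2)))
      ((2 / k ^ 2) * ((p ^ γ - C + A ^ 2 / p) / p ^ 2)) p := by
  have hC : HasDerivAt (fun x : ℝ => C / x) (-C / p ^ 2) p := by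
    refine ((hasDerivAt_const p C).div (hasDerivAt_id' p) hp.ne').congr_deriv ?_
    ring
  have hA : HasDerivAt (fun x : ℝ => A ^ 2 / (2 * x ^ 2)) (-A ^ 2 / p ^ 3) p := by
    refine ((hasDerivAt_const p (A ^ 2)).div ((hasDerivAt_pow 2 p).const_mul 2)
      (by positivity)).congr_deriv ?_
    field_simp
    ring
  refine (((hh.add hC).sub hA).const_mul (2 / k ^ 2)).congr_deriv ?_
  field_simp
  ring

theorem Ffun_hasDerivAt (γ k A C : ℝ) (hp : 0 < p) :
    HasDerivAt (Ffun γ k A C) ((2 / k ^ 2) * ((p ^ γ - C + A ^ 2 / p) / p ^ 2)) p := by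
  by_cases hγ : γ = 1
  · subst hγ
    unfold Ffun
    simpa only [if_true] using
      hasDerivAt_profile_primitive k A C (hasDerivAt_log_eq_rpow_div_sq hp) hp
  · unfold Ffun
    simpa only [hγ, if_false] using
      hasDerivAt_profile_primitive k A C (hasDerivAt_rpow_sub_one_div_sub_one hγ hp) hp

end ProfileFunction

theorem hasDerivAt_energy_of_profile_eq {G P P' : ℝ → ℝ} {a b q P'' y : ℝ}
    (hG : HasDerivAt G (a * (q / P y ^ 2)) (P y)) (hP : HasDerivAt P (P' y) y)
    (hP' : HasDerivAt P' P'' y) (hPy : P y ≠ 0)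
    (hode : P'' = a * q - b * P' y + P' y ^ 2 / P y) :
    HasDerivAt (fun x => G (P x) - (1 / 2) * (P' x / P x) ^ 2) (b * (P' y / P y) ^ 2) y := by
  refine ((hG.comp y hP).sub (((hP'.div hP hPy).pow 2).const_mul (1 / 2))).congr_deriv ?_
  simp only [hode, Pi.div_apply, Nat.cast_ofNat, Nat.add_one_sub_one, pow_one]
  field_simp
  ring

theorem ContDiffOn.hasDerivAt_deriv_deriv {P : ℝ → ℝ} {I : Set ℝ} {y : ℝ}
    (hP : ContDiffOn ℝ 2 P I) (hI : IsOpen I) (hy : y ∈ I) :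
    HasDerivAt P (deriv P y) y ∧ HasDerivAt (deriv P) (deriv (deriv P) y) y := by
  have hyI : I ∈ nhds y := hI.mem_nhds hy
  have hP' : ContDiffOn ℝ 1 (deriv P) I := hP.deriv_of_isOpen hI (by norm_num)
  exact ⟨((hP.differentiableOn (by norm_num)) y hy).differentiableAt hyI |>.hasDerivAt,
    ((hP'.differentiableOn one_ne_zero) y hy).differentiableAt hyI |>.hasDerivAt⟩

theorem energy_derivative_traveling_wave_profile_general
    (γ k μ s A C : ℝ) (hμ : 0 < μ)
    (f : ℝ → ℝ) (hf : ∀ P : ℝ, 0 < P → f P = P ^ γ - C + A ^ 2 / P)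
    (I : Set ℝ) (hIopen : IsOpen I) (hIconn : I.OrdConnected)
    (P : ℝ → ℝ) (hP : ContDiffOn ℝ 2 P I) (hpos : ∀ y ∈ I, 0 < P y)
    (hode : ∀ y ∈ I,
      deriv (deriv P) y =
        (2 / k ^ 2) * f (P y) - (2 * s * μ / k ^ 2) * deriv P y + (deriv P y) ^ 2 / P y) :
    (∀ y ∈ I,
      HasDerivAt (fun x => Ffun γ k A C (P x) - (1 / 2) * (deriv P x / P x) ^ 2)
        ((2 * s * μ / k ^ 2) * (deriv P y / P y) ^ 2) y) ∧
    (0 < s →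
      MonotoneOn (fun x => Ffun γ k A C (P x) - (1 / 2) * (deriv P x / P x) ^ 2) I) := by
  have henergy : ∀ y ∈ I,
      HasDerivAt (fun x => Ffun γ k A C (P x) - (1 / 2) * (deriv P x / P x) ^ 2)
        ((2 * s * μ / k ^ 2) * (deriv P y / P y) ^ 2) y := fun y hy => by
    obtain ⟨hP₁, hP₂⟩ := hP.hasDerivAt_deriv_deriv hIopen hy
    exact hasDerivAt_energy_of_profile_eq (Ffun_hasDerivAt γ k A C (hpos y hy)) hP₁ hP₂
      (hpos y hy).ne' (by rw [hode y hy, hf _ (hpos y hy)])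
  refine ⟨henergy, fun hs => monotoneOn_of_hasDerivWithinAt_nonneg hIconn.convex
    (fun y hy => (henergy y hy).continuousAt.continuousWithinAt)
    (fun y hy => (henergy y (interior_subset hy)).hasDerivWithinAt) (fun y _ => ?_)⟩
  positivity

/-- Along any positive `C²` solution of the traveling-wave profile equation
`P'' = (2/k²) f(P) - (2sμ/k²) P' + (P')²/P` on an open interval, the energy
`F(P) - (1/2)(P'/P)²` has derivative `(2sμ/k²)(P'/P)²`; in particular it is
non-decreasing if `s > 0`. -/
theorem energy_derivative_traveling_wave_profile
    (γ k μ s A C : ℝ) (hγ : 1 ≤ γ) (hk : 0 < k) (hμ : 0 < μ)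
    (f : ℝ → ℝ) (hf : ∀ P : ℝ, 0 < P → f P = P ^ γ - C + A ^ 2 / P)
    (I : Set ℝ) (hIopen : IsOpen I) (hIconn : I.OrdConnected)
    (P : ℝ → ℝ) (hP : ContDiffOn ℝ 2 P I) (hpos : ∀ y ∈ I, 0 < P y)
    (hode : ∀ y ∈ I,
      deriv (deriv P) y =
        (2 / k ^ 2) * f (P y) - (2 * s * μ / k ^ 2) * deriv P y + (deriv P y) ^ 2 / P y) :
    (∀ y ∈ I,
      HasDerivAt (fun x => Ffun γ k A C (P x) - (1 / 2) * (deriv P x / P x) ^ 2)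
        ((2 * s * μ / k ^ 2) * (deriv P y / P y) ^ 2) y) ∧
    (0 < s →
      MonotoneOn (fun x => Ffun γ k A C (P x) - (1 / 2) * (deriv P x / P x) ^ 2) I) :=
  energy_derivative_traveling_wave_profile_general γ k μ s A C hμ f hf I hIopen hIconn P hP hpos
    hode
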